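/- arXiv:0901.3361 — 11 statements merged into one kernel-verified Lean document; each statement's English description precedes it below -/
import Mathlib

section
/- Let x, e₁, e₂ ∈ V with B(x,x) > 0. Then the determinant of the 3×3 Gram matrix with rows (B(x,x), B(x,e₁), B(x,e₂)), (B(x,e₁), B(e₁,e₁), B(e₁,e₂)), (B(x,e₂), B(e₁,e₂), B(e₂,e₂)) is nonnegative. -/
/-!
Put `a = B(x,x)` and project `e₁, e₂` to `x^⊥` as `fᵢ = B(x,eᵢ) x - a eᵢ`. A direct computation
gives `a³ · det G(x,e₁,e₂) = B(f₁,f₁) B(f₂,f₂) - B(f₁,f₂)²`. Since `x` is timelike, the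
spatial Cauchy–Schwarz inequality makes `B` negative semidefinite on `x^⊥`, so the right-hand
side is nonnegative by Cauchy–Schwarz for `-B` restricted to `x^⊥`.
-/

def B (n : ℕ) (x y : Fin (n + 1) → ℝ) : ℝ :=
  x 0 * y 0 - ∑ i : Fin n, x i.succ * y i.succ

open LinearMap (BilinForm)

namespace LinearMap.BilinForm

variable {R M : Type*} [CommRing R] [AddCommGroup M] [Module R M]

lemma apply_smul_sub_smul_sub_of_isSymm {β : BilinForm R M} (hβ : β.IsSymm) (x y z : M) :
    β (β x y • x - β x x • y) (β x z • x - β x x • z) =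
      β x x * (β x x * β y z - β x y * β x z) := by
  have hyx : β y x = β x y := hβ.eq y x
  simp only [map_sub, map_smul, LinearMap.sub_apply, LinearMap.smul_apply, smul_eq_mul, hyx]
  ring

lemma apply_self_smul_sub_smul_eq_zero (β : BilinForm R M) (x y : M) :
    β x (β x y • x - β x x • y) = 0 := by
  simp only [map_sub, map_smul, smul_eq_mul]
  ring

variable [LinearOrder R] [IsStrictOrderedRing R] {β : BilinForm R M}

lemma sq_apply_le_of_nonpos_on_ker (hβ : β.IsSymm) {x : M}
    (hneg : ∀ v, β x v = 0 → β v v ≤ 0) {f g : M} (hf : β x f = 0) (hg : β x g = 0) :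
    β f g ^ 2 ≤ β f f * β g g := by
  let W := LinearMap.ker (β x)
  have hpos : ∀ w, 0 ≤ (-β).restrict W w w := fun w => neg_nonneg.mpr (hneg w w.2)
  have := ((-β).restrict W).apply_mul_apply_le_of_forall_zero_le hpos ⟨f, hf⟩ ⟨g, hg⟩
  simp only [BilinForm.restrict, domRestrict₁₂_apply, neg_apply, neg_mul_neg,
    hβ.eq g f] at this
  rwa [sq]

theorem det_gram_nonneg_of_nonpos_on_ker (hβ : β.IsSymm) {x : M} (hx : 0 < β x x)
    (hneg : ∀ v, β x v = 0 → β v v ≤ 0) (e₁ e₂ : M) :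
    0 ≤ Matrix.det
      !![β x x,  β x e₁,  β x e₂;
         β x e₁, β e₁ e₁, β e₁ e₂;
         β x e₂, β e₁ e₂, β e₂ e₂] := by
  have hcs := sq_apply_le_of_nonpos_on_ker hβ hneg
    (β.apply_self_smul_sub_smul_eq_zero x e₁) (β.apply_self_smul_sub_smul_eq_zero x e₂)
  simp only [apply_smul_sub_smul_sub_of_isSymm hβ] at hcs
  refine (mul_nonneg_iff_of_pos_left (pow_pos hx 3)).mp ?_
  calc (0 : R)
      ≤ β x x * (β x x * β e₁ e₁ - β x e₁ * β x e₁) *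
          (β x x * (β x x * β e₂ e₂ - β x e₂ * β x e₂)) -
        (β x x * (β x x * β e₁ e₂ - β x e₁ * β x e₂)) ^ 2 := sub_nonneg.mpr hcs
    _ = _ := by
      simp only [Matrix.det_fin_three, Matrix.of_apply, Matrix.cons_val', Matrix.cons_val_zero,
        Matrix.cons_val_fin_one, Matrix.cons_val_one, Matrix.cons_val]
      ring

end LinearMap.BilinForm

section Minkowski

variable {n : ℕ}

lemma B_self_nonpos_of_B_eq_zero {x v : Fin (n + 1) → ℝ} (hx : 0 < B n x x)
    (hv : B n x v = 0) : B n v v ≤ 0 := by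
  set Sxx := ∑ i : Fin n, x i.succ * x i.succ
  set Svv := ∑ i : Fin n, v i.succ * v i.succ
  have hSxx : 0 ≤ Sxx := Finset.sum_nonneg fun i _ => mul_self_nonneg _
  have hSvv : 0 ≤ Svv := Finset.sum_nonneg fun i _ => mul_self_nonneg _
  have hcs : (∑ i : Fin n, x i.succ * v i.succ) ^ 2 ≤ Sxx * Svv := by
    simpa only [sq] using Finset.sum_mul_sq_le_sq_mul_sq Finset.univ
      (fun i : Fin n => x i.succ) (fun i : Fin n => v i.succ)
  simp only [B] at hx hv ⊢
  have hx0 : 0 < x 0 * x 0 := by linarith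
  -- `x₀ v₀` is the spatial product of `x` and `v`, and `x` dominates its spatial part
  have hv0 : x 0 * x 0 * (v 0 * v 0) ≤ x 0 * x 0 * Svv := by
    calc x 0 * x 0 * (v 0 * v 0) = (∑ i : Fin n, x i.succ * v i.succ) ^ 2 := by
          rw [← sub_eq_zero.mp hv]; ring
      _ ≤ Sxx * Svv := hcs
      _ ≤ x 0 * x 0 * Svv := by gcongr; linarith
  linarith [le_of_mul_le_mul_left hv0 hx0]

variable (n) in
def minkowskiForm : BilinForm ℝ (Fin (n + 1) → ℝ) :=
  LinearMap.mk₂ ℝ (B n)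
    (fun x y z => by simp only [B, Pi.add_apply, add_mul, Finset.sum_add_distrib]; ring)
    (fun c x y => by simp only [B, Pi.smul_apply, smul_eq_mul, mul_assoc, ← Finset.mul_sum]; ring)
    (fun x y z => by simp only [B, Pi.add_apply, mul_add, Finset.sum_add_distrib]; ring)
    (fun c x y => by
      simp only [B, Pi.smul_apply, smul_eq_mul, mul_left_comm _ c, ← Finset.mul_sum]; ring)

@[simp]
lemma minkowskiForm_apply (x y : Fin (n + 1) → ℝ) : minkowskiForm n x y = B n x y := rfl

lemma minkowskiForm_isSymm : (minkowskiForm n).IsSymm :=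
  ⟨fun x y => by simp only [minkowskiForm_apply, B, mul_comm]⟩

end Minkowski

theorem gram_det_nonneg_general (n : ℕ) (x e₁ e₂ : Fin (n + 1) → ℝ)
    (hx : 0 < B n x x) :
    0 ≤ Matrix.det
      !![B n x x,  B n x e₁,   B n x e₂;
         B n x e₁, B n e₁ e₁,  B n e₁ e₂;
         B n x e₂, B n e₁ e₂,  B n e₂ e₂] := by
  simpa using (minkowskiForm n).det_gram_nonneg_of_nonpos_on_ker minkowskiForm_isSymm
    (x := x) (by simpa using hx) (fun v hv => by simpa using B_self_nonpos_of_B_eq_zero hx hv)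
    e₁ e₂

/-- If `B(x,x) > 0`, the determinant of the 3×3 Gram matrix of `x, e₁, e₂`
with respect to the Minkowski form is nonnegative. -/
theorem gram_det_nonneg (n : ℕ) (hn : 1 ≤ n) (x e₁ e₂ : Fin (n + 1) → ℝ)
    (hx : 0 < B n x x) :
    0 ≤ Matrix.det
      !![B n x x,  B n x e₁,   B n x e₂;
         B n x e₁, B n e₁ e₁,  B n e₁ e₂;
         B n x e₂, B n e₁ e₂,  B n e₂ e₂] :=
  gram_det_nonneg_general n x e₁ e₂ hx
end

section
/- Let e₁, e₂ ∈ V be null vectors with (e₁)₀ ≥ 0 and (e₂)₀ ≥ 0 (points of the closed boundary of the positive cone), and let x ∈ C⁺ with B(x,x) = 1. Then B(e₁,e₂) ≤ 2·B(x,e₁)·B(x,e₂). -/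
namespace B

variable {n : ℕ}

theorem comm (x y : Fin (n + 1) → ℝ) : B n x y = B n y x := by
  simp only [B, mul_comm]

theorem add_smul_right (x u v : Fin (n + 1) → ℝ) (t : ℝ) :
    B n x (u + t • v) = B n x u + t * B n x v := by
  simp only [B, Pi.add_apply, Pi.smul_apply, smul_eq_mul, mul_add, Finset.sum_add_distrib,
    mul_left_comm _ t, ← Finset.mul_sum]
  ring

theorem add_smul_self (u v : Fin (n + 1) → ℝ) (t : ℝ) :
    B n (u + t • v) (u + t • v) = B n u u + 2 * t * B n u v + t ^ 2 * B n v v := by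
  rw [add_smul_right, comm _ u, comm _ v, add_smul_right, add_smul_right, comm v u]
  ring

theorem self_eq (x : Fin (n + 1) → ℝ) : B n x x = x 0 ^ 2 - ∑ i : Fin n, x i.succ ^ 2 := by
  simp only [B, sq]

theorem self_le_sq (x : Fin (n + 1) → ℝ) : B n x x ≤ x 0 ^ 2 := by
  rw [self_eq]
  exact sub_le_self _ (Finset.sum_nonneg fun i _ => sq_nonneg _)

theorem nonneg_of_mem_closedCone {x e : Fin (n + 1) → ℝ} (hx : 0 ≤ B n x x) (hx0 : 0 ≤ x 0)
    (he : 0 ≤ B n e e) (he0 : 0 ≤ e 0) : 0 ≤ B n x e := by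
  have hCS := Finset.sum_mul_sq_le_sq_mul_sq Finset.univ (fun i : Fin n => x i.succ)
    (fun i : Fin n => e i.succ)
  rw [self_eq] at hx he
  have hspatial : (∑ i : Fin n, x i.succ * e i.succ) ^ 2 ≤ (x 0 * e 0) ^ 2 := by
    rw [mul_pow]
    exact hCS.trans (mul_le_mul (by linarith) (by linarith)
      (Finset.sum_nonneg fun i _ => sq_nonneg _) (sq_nonneg _))
  have := (abs_le_of_sq_le_sq hspatial (mul_nonneg hx0 he0)).trans' (le_abs_self _)
  rw [B]
  linarith

theorem self_mul_self_le_sq {x : Fin (n + 1) → ℝ} (hx : 0 < B n x x) (f : Fin (n + 1) → ℝ) :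
    B n f f * B n x x ≤ B n x f ^ 2 := by
  have hx0 : x 0 ≠ 0 := (pow_ne_zero_iff two_ne_zero).mp (hx.trans_le (self_le_sq x)).ne'
  -- `f - t x` has vanishing time coordinate for this `t`, so it is spacelike or zero.
  set t := f 0 / x 0
  have hspacelike : B n (f + (-t) • x) (f + (-t) • x) ≤ 0 := by
    refine (self_le_sq _).trans_eq ?_
    simp [t, field]
  rw [add_smul_self, comm f x] at hspacelike
  nlinarith [sq_nonneg (t * B n x x - B n x f), mul_le_mul_of_nonneg_left hspacelike hx.le]

end B

theorem null_pairing_le_general (n : ℕ) (e₁ e₂ x : Fin (n + 1) → ℝ)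
    (he₁ : B n e₁ e₁ = 0) (he₁0 : 0 ≤ e₁ 0)
    (he₂ : B n e₂ e₂ = 0) (he₂0 : 0 ≤ e₂ 0)
    (hx0 : 0 < x 0) (hxx : B n x x = 1) :
    B n e₁ e₂ ≤ 2 * B n x e₁ * B n x e₂ := by
  have hx : 0 < B n x x := hxx ▸ one_pos
  have hc₁ := B.nonneg_of_mem_closedCone hx.le hx0.le he₁.ge he₁0
  have hc₂ := B.nonneg_of_mem_closedCone hx.le hx0.le he₂.ge he₂0
  have hquad : ∀ t : ℝ, 0 ≤ B n x e₂ ^ 2 * (t * t)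
      + 2 * (B n x e₁ * B n x e₂ - B n e₁ e₂) * t + B n x e₁ ^ 2 := by
    intro t
    have := B.self_mul_self_le_sq hx (e₁ + t • e₂)
    rw [B.add_smul_self, B.add_smul_right, he₁, he₂, hxx] at this
    linarith
  have hdisc := discrim_le_zero hquad
  rw [discrim] at hdisc
  nlinarith [mul_nonneg hc₁ hc₂]

/-- If `e₁, e₂` are null vectors in the closed boundary of the positive cone and
`x` is in the open positive cone with `B(x,x) = 1`, then
`B(e₁,e₂) ≤ 2 B(x,e₁) B(x,e₂)`. -/
theorem null_pairing_le (n : ℕ) (hn : 1 ≤ n) (e₁ e₂ x : Fin (n + 1) → ℝ)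
    (he₁ : B n e₁ e₁ = 0) (he₁0 : 0 ≤ e₁ 0)
    (he₂ : B n e₂ e₂ = 0) (he₂0 : 0 ≤ e₂ 0)
    (hx : 0 < B n x x) (hx0 : 0 < x 0) (hxx : B n x x = 1) :
    B n e₁ e₂ ≤ 2 * B n x e₁ * B n x e₂ :=
  null_pairing_le_general n e₁ e₂ x he₁ he₁0 he₂ he₂0 hx0 hxx
end

section
/- Let e₁ and e₂ be two distinct primitive integral future-pointing null vectors in V. Then B(e₁,e₂) ≥ 1. -/
/-- The integral vector `z ∈ ℤ^{n+1}` viewed inside `V = ℝ^{n+1}`. -/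
def toReal (n : ℕ) (z : Fin (n + 1) → ℤ) : Fin (n + 1) → ℝ := fun i => (z i : ℝ)

/-!
For null vectors `x, y` the vector `w = y₀ x - x₀ y` has vanishing time component, and expanding
`B w w = -∑ wᵢ²` gives `2 x₀ y₀ B(x, y) = ∑ wᵢ²`. So two future-pointing null vectors pair
positively unless they are proportional, and two proportional primitive future-pointing integral
vectors coincide. Since `B(e₁, e₂)` is an integer, it is then at least `1`.
-/

open Finset

theorem B_toReal (n : ℕ) (z w : Fin (n + 1) → ℤ) :
    B n (toReal n z) (toReal n w) = ((z 0 * w 0 - ∑ i : Fin n, z i.succ * w i.succ : ℤ) : ℝ) := by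
  simp [B, toReal]

theorem two_mul_mul_B_eq_sum_sq {n : ℕ} {x y : Fin (n + 1) → ℝ}
    (hx : B n x x = 0) (hy : B n y y = 0) :
    2 * (x 0 * y 0) * B n x y = ∑ i : Fin n, (y 0 * x i.succ - x 0 * y i.succ) ^ 2 := by
  have hexpand : ∀ i : Fin n, (y 0 * x i.succ - x 0 * y i.succ) ^ 2 =
      y 0 ^ 2 * (x i.succ * x i.succ) - 2 * (x 0 * y 0) * (x i.succ * y i.succ)
        + x 0 ^ 2 * (y i.succ * y i.succ) := fun i => by ring
  simp only [B] at hx hy ⊢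
  rw [sum_congr rfl fun i _ => hexpand i, sum_add_distrib, sum_sub_distrib, ← mul_sum, ← mul_sum,
    ← mul_sum]
  linear_combination y 0 ^ 2 * hx + x 0 ^ 2 * hy

theorem B_pos_of_not_proportional {n : ℕ} {x y : Fin (n + 1) → ℝ}
    (hx : B n x x = 0) (hy : B n y y = 0) (hx₀ : 0 < x 0) (hy₀ : 0 < y 0)
    (hxy : ∃ i : Fin n, y 0 * x i.succ ≠ x 0 * y i.succ) :
    0 < B n x y := by
  obtain ⟨i, hi⟩ := hxy
  have hsum : 0 < ∑ i : Fin n, (y 0 * x i.succ - x 0 * y i.succ) ^ 2 :=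
    sum_pos' (fun _ _ => sq_nonneg _) ⟨i, mem_univ i, sq_pos_of_ne_zero (sub_ne_zero.2 hi)⟩
  rw [← two_mul_mul_B_eq_sum_sq hx hy] at hsum
  exact pos_of_mul_pos_right hsum (by positivity)

theorem eq_of_smul_eq_smul_of_gcd_eq_one {ι : Type*} [Fintype ι] {u v : ι → ℤ}
    (hu : univ.gcd u = 1) (hv : univ.gcd v = 1) {a b : ℤ} (ha : 0 < a) (hb : 0 < b)
    (h : a • u = b • v) : u = v := by
  have hab : a = b := by
    have hgcd : univ.gcd (fun i => a * u i) = univ.gcd (fun i => b * v i) :=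
      congrArg (univ.gcd ·) h
    simpa only [Finset.gcd_mul_left, hu, hv, mul_one,
      Int.normalize_of_nonneg ha.le, Int.normalize_of_nonneg hb.le] using hgcd
  subst hab
  exact smul_right_injective _ ha.ne' h

theorem pairing_ge_one_general (n : ℕ) (z₁ z₂ : Fin (n + 1) → ℤ)
    (hprim₁ : Finset.univ.gcd z₁ = 1) (hprim₂ : Finset.univ.gcd z₂ = 1)
    (hnull₁ : B n (toReal n z₁) (toReal n z₁) = 0)
    (hnull₂ : B n (toReal n z₂) (toReal n z₂) = 0)
    (hfut₁ : 0 < z₁ 0) (hfut₂ : 0 < z₂ 0)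
    (hne : z₁ ≠ z₂) :
    1 ≤ B n (toReal n z₁) (toReal n z₂) := by
  have hnot_prop : ∃ i : Fin n, z₂ 0 * z₁ i.succ ≠ z₁ 0 * z₂ i.succ := by
    by_contra! hprop
    refine hne (eq_of_smul_eq_smul_of_gcd_eq_one hprim₁ hprim₂ hfut₂ hfut₁ ?_)
    funext i
    exact Fin.cases (mul_comm _ _) hprop i
  have hpos : 0 < B n (toReal n z₁) (toReal n z₂) :=
    B_pos_of_not_proportional hnull₁ hnull₂ (Int.cast_pos.2 hfut₁) (Int.cast_pos.2 hfut₂)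
      (by simpa only [toReal, ← Int.cast_mul, Ne, Int.cast_inj] using hnot_prop)
  rw [B_toReal] at hpos ⊢
  exact_mod_cast hpos

/-- Two distinct primitive integral future-pointing null vectors pair to at least 1. -/
theorem pairing_ge_one (n : ℕ) (hn : 1 ≤ n) (z₁ z₂ : Fin (n + 1) → ℤ)
    (hprim₁ : Finset.univ.gcd z₁ = 1) (hprim₂ : Finset.univ.gcd z₂ = 1)
    (hnull₁ : B n (toReal n z₁) (toReal n z₁) = 0)
    (hnull₂ : B n (toReal n z₂) (toReal n z₂) = 0)
    (hfut₁ : 0 < z₁ 0) (hfut₂ : 0 < z₂ 0)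
    (hne : z₁ ≠ z₂) :
    1 ≤ B n (toReal n z₁) (toReal n z₂) :=
  pairing_ge_one_general n z₁ z₂ hprim₁ hprim₂ hnull₁ hnull₂ hfut₁ hfut₂ hne
end

section
/- Let y ∈ C⁺ and let M be a real number. Then the set of primitive integral future-pointing null vectors e ∈ V with B(y,e) ≤ M is finite. (Equivalently: for any c > 0, the point y lies in only finitely many of the horoballs cU_e attached to the rational boundary points of hyperbolic space.) -/
/-!
Write `y = (y₀, ȳ)`. For a future-pointing null vector `e` we have `|ē| = e₀`, so Cauchy–Schwarz
gives `B(y,e) = y₀e₀ - ⟨ȳ,ē⟩ ≥ (y₀ - |ȳ|) e₀`, and `y₀ - |ȳ| > 0` because `y ∈ C⁺`. Hence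
`B(y,e) ≤ M` bounds `e₀`, and every coordinate of a null vector is bounded by `|e₀|`: the integral
vectors in question lie in a bounded set of the lattice `ℤ^{n+1}`.
-/

open Finset Real

namespace Minkowski

variable {n : ℕ}

lemma B_self (x : Fin (n + 1) → ℝ) : B n x x = x 0 ^ 2 - ∑ i : Fin n, x i.succ ^ 2 := by
  simp only [B, sq]

lemma sqrt_sum_sq_lt_of_B_self_pos {y : Fin (n + 1) → ℝ} (hy : 0 < B n y y) (hy0 : 0 < y 0) :
    √(∑ i : Fin n, y i.succ ^ 2) < y 0 := by
  rw [sqrt_lt' hy0, ← sub_pos, ← B_self]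
  exact hy

lemma sqrt_sum_sq_eq_abs_of_B_self_eq_zero {x : Fin (n + 1) → ℝ} (hx : B n x x = 0) :
    √(∑ i : Fin n, x i.succ ^ 2) = |x 0| := by
  rw [B_self, sub_eq_zero] at hx
  rw [← hx, sqrt_sq_eq_abs]

lemma abs_le_abs_zero_of_B_self_eq_zero {x : Fin (n + 1) → ℝ} (hx : B n x x = 0)
    (i : Fin (n + 1)) : |x i| ≤ |x 0| := by
  cases i using Fin.cases with
  | zero => exact le_rfl
  | succ j =>
    rw [← sqrt_sum_sq_eq_abs_of_B_self_eq_zero hx, ← sqrt_sq_eq_abs]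
    exact sqrt_le_sqrt <|
      single_le_sum (f := fun i : Fin n => x i.succ ^ 2) (fun _ _ => sq_nonneg _) (mem_univ j)

lemma gap_mul_le_B_of_B_self_eq_zero (y : Fin (n + 1) → ℝ) {x : Fin (n + 1) → ℝ}
    (hx : B n x x = 0) (hx0 : 0 ≤ x 0) :
    (y 0 - √(∑ i : Fin n, y i.succ ^ 2)) * x 0 ≤ B n y x := by
  have hcs := sum_mul_le_sqrt_mul_sqrt univ (fun i : Fin n => y i.succ) (fun i => x i.succ)
  rw [sqrt_sum_sq_eq_abs_of_B_self_eq_zero hx, abs_of_nonneg hx0] at hcs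
  rw [B]
  linarith

end Minkowski

open Minkowski

theorem finitely_many_horoballs_general (n : ℕ) (y : Fin (n + 1) → ℝ)
    (hy : 0 < B n y y) (hy0 : 0 < y 0) (M : ℝ) :
    {z : Fin (n + 1) → ℤ | Finset.univ.gcd z = 1 ∧
      B n (toReal n z) (toReal n z) = 0 ∧ 0 < z 0 ∧
      B n y (toReal n z) ≤ M}.Finite := by
  set c := y 0 - √(∑ i : Fin n, y i.succ ^ 2)
  have hc : 0 < c := sub_pos.2 (sqrt_sum_sq_lt_of_B_self_pos hy hy0)
  refine ((isCompact_closedBall (0 : Fin (n + 1) → ℤ) (M / c)).finite_of_discrete).subset ?_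
  rintro z ⟨-, hnull, hpos, hM⟩
  have hz0 : (0 : ℝ) < z 0 := Int.cast_pos.2 hpos
  have hz0M : (z 0 : ℝ) ≤ M / c :=
    (le_div_iff₀' hc).2 ((gap_mul_le_B_of_B_self_eq_zero y hnull hz0.le).trans hM)
  rw [mem_closedBall_zero_iff, pi_norm_le_iff_of_nonneg (hz0.le.trans hz0M)]
  intro i
  calc ‖z i‖ = |(z i : ℝ)| := Int.norm_eq_abs _
    _ ≤ |(z 0 : ℝ)| := abs_le_abs_zero_of_B_self_eq_zero hnull i
    _ = z 0 := abs_of_pos hz0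
    _ ≤ M / c := hz0M

/-- For any point `y` of the open positive cone and any bound `M`, there are only finitely
many primitive integral future-pointing null vectors `e` with `B(y,e) ≤ M`. -/
theorem finitely_many_horoballs (n : ℕ) (hn : 1 ≤ n) (y : Fin (n + 1) → ℝ)
    (hy : 0 < B n y y) (hy0 : 0 < y 0) (M : ℝ) :
    {z : Fin (n + 1) → ℤ | Finset.univ.gcd z = 1 ∧
      B n (toReal n z) (toReal n z) = 0 ∧ 0 < z 0 ∧
      B n y (toReal n z) ≤ M}.Finite :=
  finitely_many_horoballs_general n y hy hy0 M
end

section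
/- Let e ∈ V be a null vector, let m be a nonzero real number, and let E₁, E₂ ∈ V satisfy B(E₁,e) = B(E₂,e) = m and B(E₁,E₁) = B(E₂,E₂). Set x = (1/m)·(E₂ − E₁). Then B(x,e) = 0 and α_x(E₁) = E₂. -/
/-- The strictly parabolic transformation `α_x` at a null vector `e`, for `x ⊥ e`:
`α_x(y) = y + B(y,e)·x − (B(x,y) + (1/2)B(x,x)B(y,e))·e`. -/
noncomputable def alpha (n : ℕ) (e x y : Fin (n + 1) → ℝ) : Fin (n + 1) → ℝ :=
  y + (B n y e) • x - ((B n x y) + (1 / 2) * (B n x x) * (B n y e)) • e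

/-!
Write `β` for the Minkowski form, `d = E₂ - E₁` and `x = d / m`. Expanding
`β(E₁ + d, E₁ + d)` and using `β(E₁,E₁) = β(E₂,E₂)` gives `β(d,E₁) + ½ β(d,d) = 0`, which is `m` times the coefficient of `e`
in `α_x(E₁)`. Hence `α_x(E₁) = E₁ + β(E₁,e) x = E₁ + d = E₂`.
-/

open LinearMap (BilinForm)

namespace LinearMap.BilinForm

variable {K M : Type*} [Field K] [AddCommGroup M] [Module K M]

def parabolic (β : BilinForm K M) (e x y : M) : M :=
  y + β y e • x - (β x y + 1 / 2 * β x x * β y e) • e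

lemma apply_add_self (β : BilinForm K M) (hβ : β.IsSymm) (u d : M) :
    β (u + d) (u + d) = β u u + 2 * β d u + β d d := by
  simp only [map_add, LinearMap.add_apply, hβ.eq u d]
  ring

lemma apply_sub_self_add_half_eq_zero [NeZero (2 : K)] (β : BilinForm K M) (hβ : β.IsSymm)
    {E₁ E₂ : M} (hsq : β E₁ E₁ = β E₂ E₂) :
    β (E₂ - E₁) E₁ + 1 / 2 * β (E₂ - E₁) (E₂ - E₁) = 0 := by
  have h := β.apply_add_self hβ E₁ (E₂ - E₁)
  rw [add_sub_cancel, ← hsq] at h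
  field_simp
  linear_combination -h

lemma apply_smul_sub_left_eq_zero (β : BilinForm K M) (c : K) {E₁ E₂ e : M}
    (h : β E₁ e = β E₂ e) : β (c • (E₂ - E₁)) e = 0 := by
  simp [h]

lemma parabolic_apply_eq [NeZero (2 : K)] (β : BilinForm K M) (hβ : β.IsSymm) {e E₁ E₂ : M}
    {m : K} (hm : m ≠ 0) (hE₁e : β E₁ e = m) (hsq : β E₁ E₁ = β E₂ E₂) :
    β.parabolic e ((1 / m) • (E₂ - E₁)) E₁ = E₂ := by
  have hcoeff : β ((1 / m) • (E₂ - E₁)) E₁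
      + 1 / 2 * β ((1 / m) • (E₂ - E₁)) ((1 / m) • (E₂ - E₁)) * m = 0 := by
    have h := β.apply_sub_self_add_half_eq_zero hβ hsq
    simp only [map_smul, smul_apply, smul_eq_mul]
    linear_combination (1 / m) * h
      + 1 / 2 * β (E₂ - E₁) (E₂ - E₁) * m⁻¹ * mul_inv_cancel₀ hm
  rw [parabolic, hE₁e, hcoeff, smul_smul, mul_one_div_cancel hm, one_smul, zero_smul, sub_zero,
    add_sub_cancel]

end LinearMap.BilinForm

def minkowski (n : ℕ) : BilinForm ℝ (Fin (n + 1) → ℝ) :=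
  LinearMap.mk₂ ℝ (B n)
    (fun x y z => by simp only [B, Pi.add_apply, add_mul, Finset.sum_add_distrib]; ring)
    (fun c x y => by simp only [B, Pi.smul_apply, smul_eq_mul, mul_assoc, ← Finset.mul_sum]; ring)
    (fun x y z => by simp only [B, Pi.add_apply, mul_add, Finset.sum_add_distrib]; ring)
    (fun c x y => by
      simp only [B, Pi.smul_apply, smul_eq_mul, mul_left_comm _ c, ← Finset.mul_sum]; ring)

lemma minkowski_apply (n : ℕ) (x y : Fin (n + 1) → ℝ) : minkowski n x y = B n x y := rfl

lemma isSymm_minkowski (n : ℕ) : (minkowski n).IsSymm :=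
  ⟨fun x y => by simp only [minkowski_apply, B, mul_comm]⟩

lemma alpha_eq_parabolic (n : ℕ) (e x y : Fin (n + 1) → ℝ) :
    alpha n e x y = (minkowski n).parabolic e x y := rfl

theorem alpha_transitive_general (n : ℕ) (e E₁ E₂ : Fin (n + 1) → ℝ) (m : ℝ)
    (hm : m ≠ 0)
    (hE₁e : B n E₁ e = m) (hE₂e : B n E₂ e = m)
    (hsq : B n E₁ E₁ = B n E₂ E₂) :
    B n ((1 / m) • (E₂ - E₁)) e = 0 ∧
    alpha n e ((1 / m) • (E₂ - E₁)) E₁ = E₂ := by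
  rw [alpha_eq_parabolic]
  simp only [← minkowski_apply] at hE₁e hE₂e hsq ⊢
  exact ⟨(minkowski n).apply_smul_sub_left_eq_zero _ (hE₁e.trans hE₂e.symm),
    (minkowski n).parabolic_apply_eq (isSymm_minkowski n) hm hE₁e hsq⟩

/-- If `E₁, E₂` have the same pairing `m ≠ 0` with the null vector `e` and the same
self-intersection, then the strictly parabolic transformation with parameter
`x = (1/m)(E₂ − E₁)` carries `E₁` to `E₂`. -/
theorem alpha_transitive (n : ℕ) (hn : 1 ≤ n) (e E₁ E₂ : Fin (n + 1) → ℝ) (m : ℝ)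
    (he : B n e e = 0) (hm : m ≠ 0)
    (hE₁e : B n E₁ e = m) (hE₂e : B n E₂ e = m)
    (hsq : B n E₁ E₁ = B n E₂ E₂) :
    B n ((1 / m) • (E₂ - E₁)) e = 0 ∧
    alpha n e ((1 / m) • (E₂ - E₁)) E₁ = E₂ :=
  alpha_transitive_general n e E₁ E₂ m hm hE₁e hE₂e hsq
end

section
/- Let G be a subgroup of O⁺(ℤ), let y ∈ C⁺, let p be a primitive integral future-pointing null vector, and let c > 0. Then the intersection of the G-orbit of y with the horoball {x : B(x,p) ≤ c·√(B(x,x))} is a finite union of orbits of the stabilizer G_p = {h ∈ G : h(p) = p}: there is a finite subset F ⊆ G such that every g ∈ G with B(g(y),p) ≤ c·√(B(y,y)) satisfies g(y) = h(f(y)) for some h ∈ G_p and some f ∈ F. -/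
/-- The integral lattice `ℤ^{n+1} ⊆ ℝ^{n+1}`. -/
def intLattice (n : ℕ) : Set (Fin (n + 1) → ℝ) := {x | ∀ i, ∃ m : ℤ, x i = (m : ℝ)}

/-- The open positive cone `C⁺ = {x : B(x,x) > 0, x₀ > 0}`. -/
def posCone (n : ℕ) : Set (Fin (n + 1) → ℝ) := {x | 0 < B n x x ∧ 0 < x 0}

/-- Membership in `O⁺(ℤ)`: a linear automorphism of `V` preserving the Minkowski form,
mapping the lattice `ℤ^{n+1}` onto itself and the open positive cone onto itself. -/
def InOplusZ (n : ℕ) (g : (Fin (n + 1) → ℝ) ≃ₗ[ℝ] (Fin (n + 1) → ℝ)) : Prop :=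
  (∀ x y, B n (g x) (g y) = B n x y) ∧
  g '' intLattice n = intLattice n ∧
  g '' posCone n = posCone n

/-! If `g ∈ G` moves `y` into the horoball, then `q = g⁻¹ p` is an integral, future-pointing null
vector with `B(y, q) = B(g y, p) ≤ c √B(y, y)`. Since `y` lies in the open cone, Cauchy–Schwarz gives
`(y₀ - ‖y'‖) q₀ ≤ B(y, q)`, and `|qᵢ| ≤ q₀` on the null cone, so `q` ranges over a finite set of
lattice points. Choosing one `f ∈ G` for each of these values of `g⁻¹ p`, every such `g` factors
as `g = h f` with `h = g f⁻¹` fixing `p`. -/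

theorem Subgroup.exists_finset_forall_eq_mul_of_finite_image_inv_smul {Γ X : Type*} [Group Γ]
    [MulAction Γ X] (G : Subgroup Γ) {A : Set Γ} (hA : A ⊆ G) (x : X)
    (hfin : ((fun g => g⁻¹ • x) '' A).Finite) :
    ∃ F : Finset Γ, ↑F ⊆ A ∧ ∀ g ∈ A, ∃ h ∈ G, h • x = x ∧ ∃ f ∈ F, g = h * f := by
  obtain ⟨S, hSA, hS⟩ := Set.exists_subset_bijOn A fun g => g⁻¹ • x
  have hSfin : S.Finite := Set.Finite.of_finite_image (hS.image_eq ▸ hfin) hS.injOn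
  refine ⟨hSfin.toFinset, by simpa using hSA, fun g hg => ?_⟩
  obtain ⟨f, hfS, hfg⟩ := hS.surjOn ⟨g, hg, rfl⟩
  refine ⟨g * f⁻¹, G.mul_mem (hA hg) (G.inv_mem (hA (hSA hfS))), ?_, f, by simpa using hfS,
    by group⟩
  simp only at hfg
  rw [mul_smul, hfg, smul_inv_smul]

section Minkowski

variable {n : ℕ}

noncomputable def spatialNorm (n : ℕ) (x : Fin (n + 1) → ℝ) : ℝ :=
  √(∑ i : Fin n, x i.succ ^ 2)

theorem sum_sq_succ_eq_of_null {q : Fin (n + 1) → ℝ} (hq : B n q q = 0) :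
    ∑ i : Fin n, q i.succ ^ 2 = q 0 ^ 2 := by
  simp only [B, sub_eq_zero] at hq
  simp only [sq, hq]

theorem spatialNorm_eq_abs_of_null {q : Fin (n + 1) → ℝ} (hq : B n q q = 0) :
    spatialNorm n q = |q 0| := by
  rw [spatialNorm, sum_sq_succ_eq_of_null hq, Real.sqrt_sq_eq_abs]

theorem abs_le_abs_zero_of_null {q : Fin (n + 1) → ℝ} (hq : B n q q = 0) (i : Fin (n + 1)) :
    |q i| ≤ |q 0| := by
  refine Fin.cases le_rfl (fun j => ?_) i
  rw [← spatialNorm_eq_abs_of_null hq, spatialNorm, ← Real.sqrt_sq_eq_abs]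
  exact Real.sqrt_le_sqrt (Finset.single_le_sum (fun k _ => sq_nonneg (q k.succ))
    (Finset.mem_univ j))

theorem spatialNorm_lt_of_mem_posCone {x : Fin (n + 1) → ℝ} (hx : x ∈ posCone n) :
    spatialNorm n x < x 0 := by
  obtain ⟨hB, h0⟩ := hx
  have hlt : ∑ i : Fin n, x i.succ ^ 2 < x 0 ^ 2 := by
    simp only [B, sub_pos] at hB
    simpa only [sq] using hB
  calc spatialNorm n x < √(x 0 ^ 2) := Real.sqrt_lt_sqrt (by positivity) hlt
    _ = x 0 := Real.sqrt_sq h0.le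

theorem abs_sum_mul_succ_le_of_null (x : Fin (n + 1) → ℝ) {q : Fin (n + 1) → ℝ}
    (hq : B n q q = 0) :
    |∑ i : Fin n, x i.succ * q i.succ| ≤ spatialNorm n x * |q 0| := by
  rw [← spatialNorm_eq_abs_of_null hq]
  refine abs_le.mpr ⟨?_, Real.sum_mul_le_sqrt_mul_sqrt _ _ _⟩
  have := Real.sum_mul_le_sqrt_mul_sqrt Finset.univ (fun i : Fin n => x i.succ)
    (fun i => -q i.succ)
  simp only [mul_neg, Finset.sum_neg_distrib, neg_sq] at this
  exact neg_le.mp this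

theorem mul_le_B_of_null (x : Fin (n + 1) → ℝ) {q : Fin (n + 1) → ℝ} (hq : B n q q = 0)
    (hq0 : 0 ≤ q 0) : (x 0 - spatialNorm n x) * q 0 ≤ B n x q := by
  have := (abs_le.mp (abs_sum_mul_succ_le_of_null x hq)).2
  rw [abs_of_nonneg hq0] at this
  simp only [B]
  linarith

theorem pos_of_null_of_B_pos {x q : Fin (n + 1) → ℝ} (hx : x ∈ posCone n) (hq : B n q q = 0)
    (hxq : 0 < B n x q) : 0 < q 0 := by
  by_contra! hq0
  have := (abs_le.mp (abs_sum_mul_succ_le_of_null x hq)).1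
  rw [abs_of_nonpos hq0] at this
  have : B n x q ≤ (x 0 - spatialNorm n x) * q 0 := by simp only [B]; linarith
  nlinarith [spatialNorm_lt_of_mem_posCone hx]

theorem abs_le_div_of_B_le {x q : Fin (n + 1) → ℝ} (hx : x ∈ posCone n) (hq : B n q q = 0)
    (hq0 : 0 ≤ q 0) {C : ℝ} (hC : B n x q ≤ C) (i : Fin (n + 1)) :
    |q i| ≤ C / (x 0 - spatialNorm n x) := by
  have hgap : 0 < x 0 - spatialNorm n x := sub_pos.mpr (spatialNorm_lt_of_mem_posCone hx)
  rw [le_div_iff₀ hgap]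
  calc |q i| * (x 0 - spatialNorm n x) ≤ q 0 * (x 0 - spatialNorm n x) := by
        gcongr
        exact (abs_le_abs_zero_of_null hq i).trans_eq (abs_of_nonneg hq0)
    _ ≤ B n x q := by rw [mul_comm]; exact mul_le_B_of_null x hq hq0
    _ ≤ C := hC

theorem single_zero_mem_posCone : (Pi.single 0 1 : Fin (n + 1) → ℝ) ∈ posCone n := by
  simp [posCone, B, Fin.succ_ne_zero]

theorem finite_intLattice_inter_abs_le (n : ℕ) (N : ℝ) :
    (intLattice n ∩ {x | ∀ i, |x i| ≤ N}).Finite := by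
  refine (Set.Finite.pi (t := fun _ : Fin (n + 1) => ((↑) : ℤ → ℝ) '' Set.Icc (-⌈N⌉) ⌈N⌉)
    fun _ => (Set.finite_Icc _ _).image _).subset ?_
  rintro x ⟨hx, hN⟩ i -
  obtain ⟨m, hm⟩ := hx i
  obtain ⟨hlo, hhi⟩ := abs_le.mp (hm ▸ hN i)
  refine ⟨m, ⟨?_, ?_⟩, hm.symm⟩
  · have : -(⌈N⌉ : ℝ) ≤ m := by linarith [Int.le_ceil N]
    exact_mod_cast this
  · have : (m : ℝ) ≤ ⌈N⌉ := by linarith [Int.le_ceil N]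
    exact_mod_cast this

end Minkowski

namespace InOplusZ

variable {n : ℕ} {g : (Fin (n + 1) → ℝ) ≃ₗ[ℝ] (Fin (n + 1) → ℝ)}

theorem map_mem_intLattice (hg : InOplusZ n g) {x : Fin (n + 1) → ℝ} (hx : x ∈ intLattice n) :
    g x ∈ intLattice n :=
  hg.2.1 ▸ ⟨x, hx, rfl⟩

theorem map_mem_posCone (hg : InOplusZ n g) {x : Fin (n + 1) → ℝ} (hx : x ∈ posCone n) :
    g x ∈ posCone n :=
  hg.2.2 ▸ ⟨x, hx, rfl⟩

theorem apply_zero_pos_of_null (hg : InOplusZ n g) {q : Fin (n + 1) → ℝ} (hq : B n q q = 0)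
    (hq0 : 0 < q 0) : 0 < g q 0 := by
  -- `B(g e₀, g q) = B(e₀, q) > 0` with `g e₀` in the cone forces `(g q)₀ > 0`.
  have he := single_zero_mem_posCone (n := n)
  refine pos_of_null_of_B_pos (hg.map_mem_posCone he) ((hg.1 q q).trans hq) ?_
  rw [hg.1]
  exact (mul_pos (sub_pos.mpr (spatialNorm_lt_of_mem_posCone he)) hq0).trans_le
    (mul_le_B_of_null _ hq hq0.le)

end InOplusZ

theorem orbit_meets_horoball_in_finitely_many_stabilizer_orbits_general
    (n : ℕ)
    (G : Subgroup ((Fin (n + 1) → ℝ) ≃ₗ[ℝ] (Fin (n + 1) → ℝ)))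
    (hG : ∀ g ∈ G, InOplusZ n g)
    (y : Fin (n + 1) → ℝ) (hy : y ∈ posCone n)
    (p : Fin (n + 1) → ℤ)
    (hnull : B n (toReal n p) (toReal n p) = 0) (hfut : 0 < p 0)
    (c : ℝ) :
    ∃ F : Finset ((Fin (n + 1) → ℝ) ≃ₗ[ℝ] (Fin (n + 1) → ℝ)),
      (↑F : Set ((Fin (n + 1) → ℝ) ≃ₗ[ℝ] (Fin (n + 1) → ℝ))) ⊆ (G : Set _) ∧
      ∀ g ∈ G, B n (g y) (toReal n p) ≤ c * Real.sqrt (B n y y) →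
        ∃ h ∈ G, h (toReal n p) = toReal n p ∧ ∃ f ∈ F, g y = h (f y) := by
  set C := c * √(B n y y)
  set A := {g ∈ G | B n (g y) (toReal n p) ≤ C}
  have hp0 : 0 < toReal n p 0 := Int.cast_pos.mpr hfut
  have hfin : ((fun g => g⁻¹ • toReal n p) '' A).Finite := by
    refine (finite_intLattice_inter_abs_le n (C / (y 0 - spatialNorm n y))).subset ?_
    rintro _ ⟨g, ⟨hg, hgC⟩, rfl⟩
    have hginv := hG g⁻¹ (G.inv_mem hg)
    have hBy : B n y (g⁻¹ (toReal n p)) = B n (g y) (toReal n p) := by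
      rw [← (hG g hg).1]
      exact congrArg _ (g.apply_symm_apply _)
    refine ⟨hginv.map_mem_intLattice fun i => ⟨p i, rfl⟩, abs_le_div_of_B_le hy
      ((hginv.1 _ _).trans hnull) (hginv.apply_zero_pos_of_null hnull hp0).le (hBy ▸ hgC)⟩
  obtain ⟨F, hFA, hF⟩ := G.exists_finset_forall_eq_mul_of_finite_image_inv_smul
    (A := A) (fun g hg => hg.1) (toReal n p) hfin
  refine ⟨F, fun f hf => (hFA hf).1, fun g hg hgC => ?_⟩
  obtain ⟨h, hhG, hhp, f, hfF, rfl⟩ := hF g ⟨hg, hgC⟩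
  exact ⟨h, hhG, hhp, f, hfF, rfl⟩

/-- The intersection of the `G`-orbit of a point `y ∈ C⁺` with any horoball
`{x : B(x,p) ≤ c √(B(x,x))}` at a primitive integral future-pointing null vector `p`
is a finite union of orbits of the stabilizer `G_p`. -/
theorem orbit_meets_horoball_in_finitely_many_stabilizer_orbits
    (n : ℕ) (hn : 1 ≤ n)
    (G : Subgroup ((Fin (n + 1) → ℝ) ≃ₗ[ℝ] (Fin (n + 1) → ℝ)))
    (hG : ∀ g ∈ G, InOplusZ n g)
    (y : Fin (n + 1) → ℝ) (hy : y ∈ posCone n)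
    (p : Fin (n + 1) → ℤ) (hprim : Finset.univ.gcd p = 1)
    (hnull : B n (toReal n p) (toReal n p) = 0) (hfut : 0 < p 0)
    (c : ℝ) (hc : 0 < c) :
    ∃ F : Finset ((Fin (n + 1) → ℝ) ≃ₗ[ℝ] (Fin (n + 1) → ℝ)),
      (↑F : Set ((Fin (n + 1) → ℝ) ≃ₗ[ℝ] (Fin (n + 1) → ℝ))) ⊆ (G : Set _) ∧
      ∀ g ∈ G, B n (g y) (toReal n p) ≤ c * Real.sqrt (B n y y) →
        ∃ h ∈ G, h (toReal n p) = toReal n p ∧ ∃ f ∈ F, g y = h (f y) :=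
  orbit_meets_horoball_in_finitely_many_stabilizer_orbits_general n G hG y hy p hnull hfut c
end

section
/- Let G be a subgroup of O⁺(ℤ), let C ⊆ V be a set whose closure is G-invariant (g(closure(C)) = closure(C) for all g ∈ G), and let y ∈ C⁺. Define D = {x ∈ closure(C) : B(x,y) ≤ B(x,g(y)) for all g ∈ G}. Then for every g ∈ G, if the topological interior of D meets g(interior of D), then g(y) = y. In particular, if y has trivial stabilizer in G, the interiors of D and g(D) are disjoint for every g ≠ id. -/
lemma B_add_left (n : ℕ) (x x' y : Fin (n + 1) → ℝ) :
    B n (x + x') y = B n x y + B n x' y := by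
  simp only [B, Pi.add_apply, add_mul, Finset.sum_add_distrib]
  ring

lemma B_smul_left (n : ℕ) (c : ℝ) (x y : Fin (n + 1) → ℝ) :
    B n (c • x) y = c * B n x y := by
  simp [B, mul_sub, Finset.mul_sum, mul_assoc]

lemma B_sub_right (n : ℕ) (x y y' : Fin (n + 1) → ℝ) :
    B n x (y - y') = B n x y - B n x y' := by
  simp only [B, Pi.sub_apply, mul_sub, Finset.sum_sub_distrib]
  ring

lemma B_single_zero_left (n : ℕ) (w : Fin (n + 1) → ℝ) :
    B n (Pi.single 0 1) w = w 0 := by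
  simp [B, Fin.succ_ne_zero]

lemma B_single_succ_left (n : ℕ) (j : Fin n) (w : Fin (n + 1) → ℝ) :
    B n (Pi.single j.succ 1) w = -w j.succ := by
  simp [B, Pi.single_apply, Fin.succ_ne_zero, Fin.succ_inj]

lemma eq_zero_of_forall_B_left_eq_zero {n : ℕ} {w : Fin (n + 1) → ℝ}
    (h : ∀ x, B n x w = 0) : w = 0 := by
  funext j
  induction j using Fin.cases with
  | zero => simpa [B_single_zero_left] using h (Pi.single 0 1)
  | succ i => simpa [B_single_succ_left] using h (Pi.single i.succ 1)

def minkowskiDual (n : ℕ) (w : Fin (n + 1) → ℝ) : (Fin (n + 1) → ℝ) →ₗ[ℝ] ℝ where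
  toFun x := B n x w
  map_add' x x' := B_add_left n x x' w
  map_smul' c x := B_smul_left n c x w

lemma eq_zero_of_forall_B_left_eq_zero_on_open {n : ℕ} {w : Fin (n + 1) → ℝ}
    {U : Set (Fin (n + 1) → ℝ)} (hU : IsOpen U) (hne : U.Nonempty)
    (h : ∀ x ∈ U, B n x w = 0) : w = 0 := by
  have hker : LinearMap.ker (minkowskiDual n w) = ⊤ :=
    Submodule.eq_top_of_nonempty_interior' _
      (hne.mono (interior_maximal h hU))
  exact eq_zero_of_forall_B_left_eq_zero (LinearMap.congr_fun (LinearMap.ker_eq_top.mp hker))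

def dirichletDomain (n : ℕ)
    (G : Subgroup ((Fin (n + 1) → ℝ) ≃ₗ[ℝ] (Fin (n + 1) → ℝ)))
    (S : Set (Fin (n + 1) → ℝ)) (y : Fin (n + 1) → ℝ) : Set (Fin (n + 1) → ℝ) :=
  {x ∈ S | ∀ g ∈ G, B n x y ≤ B n x (g y)}

section Dirichlet

variable {n : ℕ} {G : Subgroup ((Fin (n + 1) → ℝ) ≃ₗ[ℝ] (Fin (n + 1) → ℝ))}
  {S : Set (Fin (n + 1) → ℝ)} {y : Fin (n + 1) → ℝ}

lemma B_sub_apply_eq_zero_of_mem_dirichletDomain_inter_image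
    (hB : ∀ g ∈ G, ∀ x x', B n (g x) (g x') = B n x x') {g} (hg : g ∈ G) {x}
    (hx : x ∈ dirichletDomain n G S y ∩ g '' dirichletDomain n G S y) :
    B n x (y - g y) = 0 := by
  obtain ⟨hxD, z, hzD, rfl⟩ := hx
  have hle : B n (g z) y ≤ B n (g z) (g y) := hxD.2 g hg
  have hge : B n z y ≤ B n z (g⁻¹ y) := hzD.2 g⁻¹ (G.inv_mem hg)
  have hgy : B n (g z) (g y) = B n z y := hB g hg z y
  have hginvy : B n (g z) y = B n z (g⁻¹ y) := by
    simpa using hB g hg z (g⁻¹ y)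
  rw [B_sub_right]
  linarith

theorem apply_eq_of_interior_dirichletDomain_inter_image_nonempty
    (hB : ∀ g ∈ G, ∀ x x', B n (g x) (g x') = B n x x') {g} (hg : g ∈ G)
    (hne : (interior (dirichletDomain n G S y) ∩
      g '' interior (dirichletDomain n G S y)).Nonempty) :
    g y = y := by
  have hopen :
      IsOpen (interior (dirichletDomain n G S y) ∩ g '' interior (dirichletDomain n G S y)) :=
    isOpen_interior.inter
      (LinearMap.isOpenMap_of_finiteDimensional g.toLinearMap g.surjective _ isOpen_interior)
  refine (sub_eq_zero.mp (eq_zero_of_forall_B_left_eq_zero_on_open hopen hne fun x hx => ?_)).symm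
  exact B_sub_apply_eq_zero_of_mem_dirichletDomain_inter_image hB hg
    ⟨interior_subset hx.1, Set.image_mono interior_subset hx.2⟩

end Dirichlet

theorem LinearEquiv.image_interior_of_finiteDimensional {𝕜 E F : Type*}
    [NontriviallyNormedField 𝕜] [CompleteSpace 𝕜]
    [AddCommGroup E] [Module 𝕜 E] [TopologicalSpace E] [IsTopologicalAddGroup E]
    [ContinuousSMul 𝕜 E] [T2Space E] [FiniteDimensional 𝕜 E]
    [AddCommGroup F] [Module 𝕜 F] [TopologicalSpace F] [IsTopologicalAddGroup F]
    [ContinuousSMul 𝕜 F] [T2Space F] (g : E ≃ₗ[𝕜] F) (s : Set E) :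
    g '' interior s = interior (g '' s) := by
  simpa using g.toContinuousLinearEquiv.toHomeomorph.image_interior s

theorem dirichlet_interiors_disjoint_general (n : ℕ)
    (G : Subgroup ((Fin (n + 1) → ℝ) ≃ₗ[ℝ] (Fin (n + 1) → ℝ)))
    (hG : ∀ g ∈ G, InOplusZ n g)
    (C : Set (Fin (n + 1) → ℝ))
    (y : Fin (n + 1) → ℝ)
    (D : Set (Fin (n + 1) → ℝ))
    (hD : D = {x ∈ closure C | ∀ g ∈ G, B n x y ≤ B n x (g y)}) :
    (∀ g ∈ G, (interior D ∩ (g : (Fin (n + 1) → ℝ) ≃ₗ[ℝ] _) '' interior D).Nonempty →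
      (g : (Fin (n + 1) → ℝ) ≃ₗ[ℝ] _) y = y) ∧
    ((∀ g ∈ G, (g : (Fin (n + 1) → ℝ) ≃ₗ[ℝ] _) y = y → g = 1) →
      ∀ g ∈ G, g ≠ 1 →
        Disjoint (interior D) (interior ((g : (Fin (n + 1) → ℝ) ≃ₗ[ℝ] _) '' D))) := by
  change D = dirichletDomain n G (closure C) y at hD
  subst hD
  have hfix : ∀ g ∈ G, (interior (dirichletDomain n G (closure C) y) ∩
      g '' interior (dirichletDomain n G (closure C) y)).Nonempty → g y = y :=
    fun _ hg => apply_eq_of_interior_dirichletDomain_inter_image_nonempty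
      (fun g hg => (hG g hg).1) hg
  refine ⟨hfix, fun htriv g hg hne => Set.disjoint_left.mpr fun x hx hgx => hne ?_⟩
  rw [← g.image_interior_of_finiteDimensional] at hgx
  exact htriv g hg (hfix g hg ⟨x, hx, hgx⟩)

/-- If the interior of the Dirichlet domain `D` meets `g` applied to its own interior,
then `g` fixes the center `y`; in particular, if `y` has trivial stabilizer, the
interiors of `D` and `g(D)` are disjoint for every `g ≠ 1`. -/
theorem dirichlet_interiors_disjoint (n : ℕ) (hn : 1 ≤ n)
    (G : Subgroup ((Fin (n + 1) → ℝ) ≃ₗ[ℝ] (Fin (n + 1) → ℝ)))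
    (hG : ∀ g ∈ G, InOplusZ n g)
    (C : Set (Fin (n + 1) → ℝ))
    (hCinv : ∀ g ∈ G, (g : (Fin (n + 1) → ℝ) ≃ₗ[ℝ] _) '' closure C = closure C)
    (y : Fin (n + 1) → ℝ) (hy : y ∈ posCone n)
    (D : Set (Fin (n + 1) → ℝ))
    (hD : D = {x ∈ closure C | ∀ g ∈ G, B n x y ≤ B n x (g y)}) :
    (∀ g ∈ G, (interior D ∩ (g : (Fin (n + 1) → ℝ) ≃ₗ[ℝ] _) '' interior D).Nonempty →
      (g : (Fin (n + 1) → ℝ) ≃ₗ[ℝ] _) y = y) ∧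
    ((∀ g ∈ G, (g : (Fin (n + 1) → ℝ) ≃ₗ[ℝ] _) y = y → g = 1) →
      ∀ g ∈ G, g ≠ 1 →
        Disjoint (interior D) (interior ((g : (Fin (n + 1) → ℝ) ≃ₗ[ℝ] _) '' D))) :=
  dirichlet_interiors_disjoint_general n G hG C y D hD
end

section
/- (Negativity lemma, first part.) Let t ∈ ℝ^r be such that the vector M·t has all entries nonnegative, i.e., (M·t)ᵢ ≥ 0 for all i. Then tᵢ ≤ 0 for all i. (Equivalently: if −D = ∑ᵢ tᵢ Nᵢ is a linear combination of curves with negative definite intersection matrix M such that −D has nonnegative intersection with each Nᵢ, then D is effective.) -/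
/-!
Split `t = t⁺ - t⁻`. Since `t⁺` and `t⁻` have disjoint supports and `M` is nonnegative off the
diagonal, `t⁺ ⬝ M t⁻ ≥ 0`; together with `t⁺ ⬝ M t ≥ 0` this gives `t⁺ ⬝ M t⁺ ≥ 0`, so negative
definiteness forces `t⁺ = 0`.
-/

open Matrix

theorem posPart_mul_negPart_eq_zero {R : Type*} [Ring R] [LinearOrder R] [IsOrderedRing R]
    (a : R) : a⁺ * a⁻ = 0 := by
  rcases le_total a 0 with h | h
  · rw [posPart_eq_zero.2 h, zero_mul]
  · rw [negPart_eq_zero.2 h, mul_zero]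

namespace Matrix

variable {ι R : Type*} [Fintype ι]

theorem dotProduct_mulVec_nonneg_of_offDiag_nonneg [CommSemiring R] [PartialOrder R]
    [IsOrderedRing R] {M : Matrix ι ι R} (hoff : ∀ i j, i ≠ j → 0 ≤ M i j) {p n : ι → R}
    (hp : 0 ≤ p) (hn : 0 ≤ n) (hpn : ∀ i, p i * n i = 0) : 0 ≤ p ⬝ᵥ M *ᵥ n := by
  refine Finset.sum_nonneg fun i _ => ?_
  rw [mulVec, dotProduct, Finset.mul_sum]
  refine Finset.sum_nonneg fun j _ => ?_
  obtain rfl | hij := eq_or_ne i j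
  · rw [mul_left_comm, hpn, mul_zero]
  · exact mul_nonneg (hp i) (mul_nonneg (hoff i j hij) (hn j))

theorem nonpos_of_mulVec_nonneg [CommRing R] [LinearOrder R] [IsStrictOrderedRing R]
    [StarRing R] [TrivialStar R] {M : Matrix ι ι R} (hneg : (-M).PosDef)
    (hoff : ∀ i j, i ≠ j → 0 ≤ M i j) {t : ι → R} (ht : 0 ≤ M *ᵥ t) : t ≤ 0 := by
  have ht_pos : t⁺ = t + t⁻ := eq_add_of_sub_eq (posPart_sub_negPart t)
  have hquad : 0 ≤ t⁺ ⬝ᵥ M *ᵥ t⁺ :=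
    calc 0 ≤ t⁺ ⬝ᵥ M *ᵥ t + t⁺ ⬝ᵥ M *ᵥ t⁻ :=
          add_nonneg (dotProduct_nonneg_of_nonneg (posPart_nonneg t) ht)
            (dotProduct_mulVec_nonneg_of_offDiag_nonneg hoff (posPart_nonneg t)
              (negPart_nonneg t) fun i => by
                simp only [Pi.posPart_apply, Pi.negPart_apply, posPart_mul_negPart_eq_zero])
      _ = t⁺ ⬝ᵥ M *ᵥ t⁺ := by rw [← dotProduct_add, ← mulVec_add, ← ht_pos]
  rw [← posPart_eq_zero]
  by_contra hne
  have := hneg.dotProduct_mulVec_pos hne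
  rw [star_trivial, neg_mulVec, dotProduct_neg] at this
  exact (neg_pos.1 this).not_ge hquad

end Matrix

theorem negativity_lemma_effective_general (r : ℕ)
    (M : Matrix (Fin r) (Fin r) ℝ) (hneg : (-M).PosDef)
    (hoff : ∀ i j : Fin r, i ≠ j → 0 ≤ M i j)
    (t : Fin r → ℝ) (ht : ∀ i, 0 ≤ M.mulVec t i) :
    ∀ i, t i ≤ 0 :=
  Matrix.nonpos_of_mulVec_nonneg hneg hoff ht

/-- Negativity lemma, first part: if `M` is a symmetric negative definite real matrix with
nonnegative off-diagonal entries and `M·t` has all entries nonnegative, then `t ≤ 0`. -/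
theorem negativity_lemma_effective (r : ℕ) (hr : 1 ≤ r)
    (M : Matrix (Fin r) (Fin r) ℝ) (hsym : M.IsSymm) (hneg : (-M).PosDef)
    (hoff : ∀ i j : Fin r, i ≠ j → 0 ≤ M i j)
    (t : Fin r → ℝ) (ht : ∀ i, 0 ≤ M.mulVec t i) :
    ∀ i, t i ≤ 0 :=
  negativity_lemma_effective_general r M hneg hoff t ht
end

section
/- (Negativity lemma, support part.) Let t ∈ ℝ^r be such that (M·t)ᵢ ≥ 0 for all i. Then for all indices i ≠ j with tᵢ = 0 and M i j > 0, one has tⱼ = 0. Consequently, the set {i : tᵢ < 0} is a union of connected components of the graph on {1,…,r} with an edge between i and j whenever i ≠ j and M i j > 0. (Equivalently: the support of the effective divisor D with −D = ∑ tᵢNᵢ is a union of connected components of N.) -/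
/-!
Write `t = t⁺ - t⁻`. Since the off-diagonal entries of `M` are nonnegative and `t⁺`, `t⁻` have
disjoint supports, `t⁺ ⬝ᵥ M *ᵥ t⁻ ≥ 0`, hence `t⁺ ⬝ᵥ M *ᵥ t⁺ ≥ t⁺ ⬝ᵥ M *ᵥ t ≥ 0`, and negative
definiteness forces `t⁺ = 0`. Now if `tᵢ = 0`, then `(M t)ᵢ = ∑ₖ Mᵢₖ tₖ` is a sum of nonpositive
terms which is `≥ 0`, so `tⱼ = 0` whenever `Mᵢⱼ > 0`. By symmetry of `M`, negativity of `t`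
therefore propagates along the edges of the graph.
-/

open Matrix

namespace Matrix

variable {ι : Type*} [Fintype ι] {M : Matrix ι ι ℝ}

lemma dotProduct_mulVec_nonneg_of_mul_eq_zero (hoff : ∀ i j, i ≠ j → 0 ≤ M i j)
    {p q : ι → ℝ} (hp : 0 ≤ p) (hq : 0 ≤ q) (hpq : ∀ i, p i * q i = 0) :
    0 ≤ p ⬝ᵥ M *ᵥ q := by
  simp only [dotProduct, mulVec, Finset.mul_sum]
  refine Finset.sum_nonneg fun i _ => Finset.sum_nonneg fun j _ => ?_
  rcases eq_or_ne i j with rfl | hij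
  · rw [mul_left_comm, hpq, mul_zero]
  · exact mul_nonneg (hp i) (mul_nonneg (hoff i j hij) (hq j))

lemma nonpos_of_posDef_neg_of_mulVec_nonneg (hneg : (-M).PosDef)
    (hoff : ∀ i j, i ≠ j → 0 ≤ M i j) {t : ι → ℝ} (ht : 0 ≤ M *ᵥ t) : t ≤ 0 := by
  have hdisjoint : ∀ i, t⁺ i * t⁻ i = 0 := fun i => by
    rcases le_total (t i) 0 with h | h <;> simp [h]
  have hsplit : t⁺ = t + t⁻ := eq_add_of_sub_eq (posPart_sub_negPart t)
  have hquad : 0 ≤ t⁺ ⬝ᵥ M *ᵥ t⁺ := by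
    rw [hsplit, mulVec_add, dotProduct_add, ← hsplit]
    exact add_nonneg (dotProduct_nonneg_of_nonneg (posPart_nonneg t) ht)
      (dotProduct_mulVec_nonneg_of_mul_eq_zero hoff (posPart_nonneg t) (negPart_nonneg t)
        hdisjoint)
  by_contra hpos
  have := hneg.dotProduct_mulVec_pos (x := t⁺) (by rwa [Ne, posPart_eq_zero])
  simp only [star_trivial, neg_mulVec, dotProduct_neg] at this
  linarith

lemma eq_zero_of_mulVec_apply_nonneg (hoff : ∀ i j, i ≠ j → 0 ≤ M i j) {t : ι → ℝ}
    (ht : t ≤ 0) {i j : ι} (hMt : 0 ≤ (M *ᵥ t) i) (hti : t i = 0) (hij : 0 < M i j) :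
    t j = 0 := by
  have hterm : ∀ k ∈ Finset.univ, M i k * t k ≤ 0 := fun k _ => by
    rcases eq_or_ne i k with rfl | hik
    · simp [hti]
    · exact mul_nonpos_of_nonneg_of_nonpos (hoff i k hik) (ht k)
  have hsum : ∑ k, M i k * t k = 0 := le_antisymm (Finset.sum_nonpos hterm) hMt
  exact (mul_eq_zero.mp ((Finset.sum_eq_zero_iff_of_nonpos hterm).mp hsum j
    (Finset.mem_univ j))).resolve_left hij.ne'

lemma neg_of_reflTransGen_of_mulVec_nonneg (hsym : M.IsSymm)
    (hoff : ∀ i j, i ≠ j → 0 ≤ M i j) {t : ι → ℝ} (ht : t ≤ 0) (hMt : 0 ≤ M *ᵥ t) {i j : ι}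
    (hij : Relation.ReflTransGen (fun a b => 0 < M a b) i j) (hti : t i < 0) : t j < 0 := by
  induction hij with
  | refl => exact hti
  | @tail b c _ hbc htb =>
    refine (ht c).lt_of_ne fun htc => htb.ne ?_
    exact eq_zero_of_mulVec_apply_nonneg hoff ht (hMt c) htc (hsym.apply b c ▸ hbc)

end Matrix

theorem negativity_lemma_support_general (r : ℕ)
    (M : Matrix (Fin r) (Fin r) ℝ) (hsym : M.IsSymm) (hneg : (-M).PosDef)
    (hoff : ∀ i j : Fin r, i ≠ j → 0 ≤ M i j)
    (t : Fin r → ℝ) (ht : ∀ i, 0 ≤ M.mulVec t i) :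
    (∀ i j : Fin r, i ≠ j → t i = 0 → 0 < M i j → t j = 0) ∧
    (∀ i j : Fin r, Relation.ReflTransGen (fun a b => a ≠ b ∧ 0 < M a b) i j →
      t i < 0 → t j < 0) := by
  have hnonpos : t ≤ 0 := nonpos_of_posDef_neg_of_mulVec_nonneg hneg hoff ht
  refine ⟨fun i j _ hti hij => eq_zero_of_mulVec_apply_nonneg hoff hnonpos (ht i) hti hij,
    fun i j hij hti => ?_⟩
  exact neg_of_reflTransGen_of_mulVec_nonneg hsym hoff hnonpos ht
    (Relation.ReflTransGen.mono (fun _ _ hab => hab.2) _ _ hij) hti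

/-- Negativity lemma, support part: if `M` is a symmetric negative definite real matrix
with nonnegative off-diagonal entries and `M·t` has all entries nonnegative, then whenever
`tᵢ = 0` and `M i j > 0` (for `i ≠ j`) also `tⱼ = 0`; consequently the set `{i : tᵢ < 0}`
is a union of connected components of the graph with an edge between `i` and `j` whenever
`i ≠ j` and `M i j > 0`. -/
theorem negativity_lemma_support (r : ℕ) (hr : 1 ≤ r)
    (M : Matrix (Fin r) (Fin r) ℝ) (hsym : M.IsSymm) (hneg : (-M).PosDef)
    (hoff : ∀ i j : Fin r, i ≠ j → 0 ≤ M i j)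
    (t : Fin r → ℝ) (ht : ∀ i, 0 ≤ M.mulVec t i) :
    (∀ i j : Fin r, i ≠ j → t i = 0 → 0 < M i j → t j = 0) ∧
    (∀ i j : Fin r, Relation.ReflTransGen (fun a b => a ≠ b ∧ 0 < M a b) i j →
      t i < 0 → t j < 0) :=
  negativity_lemma_support_general r M hsym hneg hoff t ht
end

section
/- There exists a vector a ∈ ℝ^r with aᵢ > 0 for all i and (M·a)ᵢ = −1 for all i. (Equivalently: there is a positive linear combination D = ∑ aᵢNᵢ of the curves Nᵢ with D·Nᵢ = −1 for all i.) -/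
/-!
Solve `M a = -1` (possible since `M` is invertible) and split `a = a⁺ - a⁻`. Because the
off-diagonal entries of `M` are nonnegative and `a⁺`, `a⁻` have disjoint supports,
`a⁻ ⬝ M a⁺ ≥ 0`, while `a⁻ ⬝ M a = -∑ a⁻ᵢ ≤ 0`; hence `a⁻ ⬝ M a⁻ ≥ 0`, and negative
definiteness forces `a⁻ = 0`. Finally, if some `aᵢ` vanished, `(M a)ᵢ = ∑_{j ≠ i} Mᵢⱼ aⱼ` would
be nonnegative rather than `-1`.
-/

namespace Matrix

section OrderedSemiring

variable {n R : Type*} [Fintype n] [CommSemiring R] [PartialOrder R] [IsOrderedRing R]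
  {M : Matrix n n R}

theorem dotProduct_mulVec_nonneg_of_mul_eq_zero_s16 (hoff : ∀ i j, i ≠ j → 0 ≤ M i j)
    {x y : n → R} (hx : 0 ≤ x) (hy : 0 ≤ y) (hxy : ∀ i, x i * y i = 0) :
    0 ≤ x ⬝ᵥ M *ᵥ y := by
  simp only [dotProduct, mulVec, Finset.mul_sum]
  refine Finset.sum_nonneg fun i _ => Finset.sum_nonneg fun j _ => ?_
  obtain rfl | hij := eq_or_ne i j
  · rw [mul_left_comm, hxy i, mul_zero]
  · exact mul_nonneg (hx i) (mul_nonneg (hoff i j hij) (hy j))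

theorem mulVec_apply_nonneg_of_apply_eq_zero (hoff : ∀ i j, i ≠ j → 0 ≤ M i j)
    {a : n → R} (ha : 0 ≤ a) {i : n} (hi : a i = 0) : 0 ≤ (M *ᵥ a) i := by
  refine Finset.sum_nonneg fun j _ => ?_
  obtain rfl | hij := eq_or_ne i j
  · simp [hi]
  · exact mul_nonneg (hoff i j hij) (ha j)

end OrderedSemiring

variable {n : Type*} [Fintype n] {M : Matrix n n ℝ}

theorem nonneg_of_mulVec_nonpos (hneg : (-M).PosDef) (hoff : ∀ i j, i ≠ j → 0 ≤ M i j)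
    {a : n → ℝ} (ha : M *ᵥ a ≤ 0) : 0 ≤ a := by
  rw [← negPart_eq_zero]
  by_contra hne
  have hpos := hneg.dotProduct_mulVec_pos hne
  rw [star_trivial, neg_mulVec, dotProduct_neg, neg_pos] at hpos
  have hcross : 0 ≤ a⁻ ⬝ᵥ M *ᵥ a⁺ :=
    dotProduct_mulVec_nonneg_of_mul_eq_zero_s16 hoff (negPart_nonneg a) (posPart_nonneg a)
      fun i => by
        rcases le_total (a i) 0 with h | h
        · simp [posPart_eq_zero.2 h]
        · simp [negPart_eq_zero.2 h]
  have hsol : a⁻ ⬝ᵥ M *ᵥ a ≤ 0 :=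
    Finset.sum_nonpos fun i _ => mul_nonpos_of_nonneg_of_nonpos (negPart_nonneg a i) (ha i)
  have hsplit := congrArg (fun v => a⁻ ⬝ᵥ M *ᵥ v) (posPart_sub_negPart a)
  simp only [mulVec_sub, dotProduct_sub] at hsplit
  linarith

end Matrix

open Matrix in
theorem exists_positive_with_mulVec_neg_one_general (r : ℕ)
    (M : Matrix (Fin r) (Fin r) ℝ) (hneg : (-M).PosDef)
    (hoff : ∀ i j : Fin r, i ≠ j → 0 ≤ M i j) :
    ∃ a : Fin r → ℝ, (∀ i, 0 < a i) ∧ ∀ i, M.mulVec a i = -1 := by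
  have hM : IsUnit M := by simpa using hneg.isUnit.neg
  obtain ⟨a, ha⟩ := mulVec_surjective_iff_isUnit.2 hM fun _ => -1
  have hnonneg : 0 ≤ a := nonneg_of_mulVec_nonpos hneg hoff fun i => by simp [ha]
  refine ⟨a, fun i => (hnonneg i).lt_of_ne' fun hi => ?_, congrFun ha⟩
  have := mulVec_apply_nonneg_of_apply_eq_zero hoff hnonneg hi
  norm_num [ha] at this

/-- For a symmetric negative definite real matrix `M` with nonnegative off-diagonal
entries, there is a strictly positive vector `a` with `M·a = -1` in every entry. -/
theorem exists_positive_with_mulVec_neg_one (r : ℕ) (hr : 1 ≤ r)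
    (M : Matrix (Fin r) (Fin r) ℝ) (hsym : M.IsSymm) (hneg : (-M).PosDef)
    (hoff : ∀ i j : Fin r, i ≠ j → 0 ≤ M i j) :
    ∃ a : Fin r → ℝ, (∀ i, 0 < a i) ∧ ∀ i, M.mulVec a i = -1 :=
  exists_positive_with_mulVec_neg_one_general r M hneg hoff
end

section
/- (Hodge-index proportionality.) Let u ∈ V be a nonzero null vector with u₀ > 0, and let v ∈ V lie in the closed positive cone, i.e., B(v,v) ≥ 0 and v₀ ≥ 0. If B(u,v) = 0, then v is a nonnegative multiple of u: there exists a real c ≥ 0 with v = c·u. -/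
variable {n : ℕ}

theorem B_comm (x y : Fin (n + 1) → ℝ) : B n x y = B n y x := by
  simp only [B, mul_comm]

theorem B_sub_smul_self (x y : Fin (n + 1) → ℝ) (c : ℝ) :
    B n (x - c • y) (x - c • y) = B n x x - 2 * c * B n x y + c ^ 2 * B n y y := by
  have htail : ∑ i : Fin n, (x i.succ - c * y i.succ) * (x i.succ - c * y i.succ) =
      ∑ i : Fin n, x i.succ * x i.succ - 2 * c * ∑ i : Fin n, x i.succ * y i.succ +
        c ^ 2 * ∑ i : Fin n, y i.succ * y i.succ := by
    simp only [Finset.mul_sum, ← Finset.sum_sub_distrib, ← Finset.sum_add_distrib]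
    exact Finset.sum_congr rfl fun i _ => by ring
  simp only [B, Pi.sub_apply, Pi.smul_apply, smul_eq_mul, htail]
  ring

theorem B_self_of_head_eq_zero {w : Fin (n + 1) → ℝ} (hw : w 0 = 0) :
    B n w w = -∑ i : Fin n, w i.succ ^ 2 := by
  simp [B, hw, sq]

theorem eq_zero_of_head_eq_zero_of_B_self_nonneg {w : Fin (n + 1) → ℝ} (hw : w 0 = 0)
    (hB : 0 ≤ B n w w) : w = 0 := by
  rw [B_self_of_head_eq_zero hw, neg_nonneg] at hB
  have htail := (Finset.sum_eq_zero_iff_of_nonneg fun i _ => sq_nonneg (w i.succ)).mp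
    (le_antisymm hB (Finset.sum_nonneg fun i _ => sq_nonneg _))
  funext i
  refine Fin.cases hw (fun j => ?_) i
  exact pow_eq_zero_iff two_ne_zero |>.mp (htail j (Finset.mem_univ j))

theorem null_orthogonal_proportional_general (n : ℕ)
    (u v : Fin (n + 1) → ℝ) (hunull : B n u u = 0) (hu0 : 0 < u 0)
    (hv : 0 ≤ B n v v) (hv0 : 0 ≤ v 0) (huv : B n u v = 0) :
    ∃ c : ℝ, 0 ≤ c ∧ v = c • u := by
  set c := v 0 / u 0
  have hw0 : (v - c • u) 0 = 0 := by
    simp [c, div_mul_cancel₀ _ hu0.ne']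
  have hw : 0 ≤ B n (v - c • u) (v - c • u) := by
    rwa [B_sub_smul_self, B_comm v u, huv, hunull, mul_zero, mul_zero, sub_zero, add_zero]
  exact ⟨c, div_nonneg hv0 hu0.le,
    sub_eq_zero.mp (eq_zero_of_head_eq_zero_of_B_self_nonneg hw0 hw)⟩

/-- Hodge-index proportionality: if `u` is a nonzero future-pointing null vector and `v`
lies in the closed positive cone with `B(u,v) = 0`, then `v` is a nonnegative multiple
of `u`. -/
theorem null_orthogonal_proportional (n : ℕ) (hn : 1 ≤ n)
    (u v : Fin (n + 1) → ℝ) (hu : u ≠ 0) (hunull : B n u u = 0) (hu0 : 0 < u 0)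
    (hv : 0 ≤ B n v v) (hv0 : 0 ≤ v 0) (huv : B n u v = 0) :
    ∃ c : ℝ, 0 ≤ c ∧ v = c • u :=
  null_orthogonal_proportional_general n u v hunull hu0 hv hv0 huv
end
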